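/- arXiv:0710.1469 — 2 statements merged into one kernel-verified Lean document; each statement's English description precedes it below -/
import Mathlib

section
/- Let m > 1 be an integer and n = 2^m - 1, and let {C_h}_{h=0}^{n} denote the weight distribution of the binary Hamming code H(m,2). Then C_0 = 1, C_1 = 0, and for every i ≥ 1, (i+1) C_{i+1} + C_i + (n - i + 1) C_{i-1} = binom(n, i). -/
open Finset

/-- The weight distribution of the binary linear code with parity-check matrix `H`:
`binaryWeightCount H h` is the number of codewords of Hamming weight `h`. -/
noncomputable def binaryWeightCount {m n : ℕ} (H : Matrix (Fin m) (Fin n) (ZMod 2))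
    (h : ℕ) : ℕ :=
  Nat.card {c : Fin n → ZMod 2 // H.mulVec c = 0 ∧ hammingNorm c = h}

/-!
The Hamming code is perfect: the radius-one Hamming balls around its codewords partition
`𝔽₂ⁿ`. Indeed a vector `v` with nonzero syndrome `H v` has that syndrome as a column `H.col j`,
so `v + eⱼ` is a codeword, and two codewords at distance at most two from each other coincide
because the columns are nonzero and distinct. Counting the vectors of weight `i` by the
codeword whose ball contains them, a codeword of weight `w` accounts for one vector if `w = i`,
for `i + 1` vectors if `w = i + 1` (clear one of its ones) and for `n - i + 1` vectors if
`w = i - 1` (set one of its zeros); this gives the recurrence.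
-/

open Matrix

namespace BinaryHamming

section

variable {ι : Type*} [DecidableEq ι]

theorem injective_add_single_one (c : ι → ZMod 2) :
    Function.Injective fun j => (c + Pi.single j 1 : ι → ZMod 2) := by
  intro j k h
  simpa [Pi.single_apply, eq_comm] using congrFun (add_left_cancel h) j

variable [Fintype ι]

theorem card_filter_hammingNorm_eq (i : ℕ) :
    #{v : ι → ZMod 2 | hammingNorm v = i} = (Fintype.card ι).choose i := by
  have hbit : ∀ a : ZMod 2, (if a ≠ 0 then 1 else 0) = a := by decide
  rw [← card_univ, ← card_powersetCard]
  refine card_nbij' (fun v => univ.filter fun k => v k ≠ 0)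
    (fun s k => if k ∈ s then 1 else 0) ?_ ?_ ?_ ?_
  · intro v hv
    simpa [hammingNorm, mem_powersetCard] using hv
  · intro s hs
    simpa [hammingNorm, mem_powersetCard] using hs
  · intro v _
    ext k
    simp [hbit]
  · intro s _
    ext k
    by_cases hk : k ∈ s <;> simp [hk]

theorem support_add_single_one_of_eq_zero {c : ι → ZMod 2} {j : ι} (hj : c j = 0) :
    (univ.filter fun k => (c + Pi.single j 1 : ι → ZMod 2) k ≠ 0) =
      insert j (univ.filter fun k => c k ≠ 0) := by
  ext k
  by_cases hk : k = j
  · subst hk; simp [hj]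
  · simp [hk]

theorem support_add_single_one_of_ne_zero {c : ι → ZMod 2} {j : ι} (hj : c j ≠ 0) :
    (univ.filter fun k => (c + Pi.single j 1 : ι → ZMod 2) k ≠ 0) =
      (univ.filter fun k => c k ≠ 0).erase j := by
  have hbit : ∀ a : ZMod 2, a ≠ 0 → a + 1 = 0 := by decide
  ext k
  by_cases hk : k = j
  · subst hk; simp [hbit _ hj]
  · simp [hk]

theorem hammingNorm_add_single_one_of_eq_zero {c : ι → ZMod 2} {j : ι} (hj : c j = 0) :
    hammingNorm (c + Pi.single j 1 : ι → ZMod 2) = hammingNorm c + 1 := by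
  rw [hammingNorm, support_add_single_one_of_eq_zero hj, card_insert_of_notMem (by simp [hj])]
  rfl

theorem hammingNorm_add_single_one_of_ne_zero {c : ι → ZMod 2} {j : ι} (hj : c j ≠ 0) :
    hammingNorm (c + Pi.single j 1 : ι → ZMod 2) + 1 = hammingNorm c := by
  rw [hammingNorm, support_add_single_one_of_ne_zero hj, card_erase_add_one (by simp [hj])]
  rfl

theorem hammingNorm_le_one_iff {e : ι → ZMod 2} :
    hammingNorm e ≤ 1 ↔ e = 0 ∨ ∃ j, e = Pi.single j 1 := by
  constructor
  · intro he
    by_contra! h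
    obtain ⟨j, hj⟩ := Function.ne_iff.1 h.1
    have hnorm := hammingNorm_add_single_one_of_ne_zero hj
    have hzero : e + Pi.single j 1 = 0 := hammingNorm_eq_zero.1 (by omega)
    exact h.2 j (by rwa [← ZModModule.sub_eq_add, sub_eq_zero] at hzero)
  · rintro (rfl | ⟨j, rfl⟩)
    · simp
    · simpa using (hammingNorm_add_single_one_of_eq_zero (c := 0) (j := j) rfl).le

theorem hammingDist_le_one_iff {v c : ι → ZMod 2} :
    hammingDist v c ≤ 1 ↔ v = c ∨ ∃ j, v = c + Pi.single j 1 := by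
  rw [hammingDist_comm]
  simp only [hammingDist_eq_hammingNorm, neg_add_eq_sub, hammingNorm_le_one_iff,
    sub_eq_iff_eq_add', add_zero]

theorem hammingNorm_add_single_one_eq_iff {c : ι → ZMod 2} {j : ι} {i : ℕ} :
    hammingNorm (c + Pi.single j 1 : ι → ZMod 2) = i ↔
      c j ≠ 0 ∧ hammingNorm c = i + 1 ∨ c j = 0 ∧ hammingNorm c + 1 = i := by
  by_cases hj : c j = 0
  · simp [hj, hammingNorm_add_single_one_of_eq_zero hj]
  · have := hammingNorm_add_single_one_of_ne_zero hj
    simp only [hj, ne_eq, not_false_eq_true, true_and, false_and, or_false]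
    omega

theorem card_filter_hammingNorm_add_single_one_eq (c : ι → ZMod 2) (i : ℕ) :
    #{j | hammingNorm (c + Pi.single j 1 : ι → ZMod 2) = i} =
      (if hammingNorm c = i + 1 then i + 1 else 0) +
        (if hammingNorm c + 1 = i then Fintype.card ι + 1 - i else 0) := by
  have hzeros : #{j | c j = 0} + hammingNorm c = Fintype.card ι := by
    simpa [hammingNorm] using card_filter_add_card_filter_not (s := univ) (fun j => c j = 0)
  rw [filter_congr fun j _ => hammingNorm_add_single_one_eq_iff, filter_or,
    card_union_of_disjoint (disjoint_filter.2 fun j _ h h' => h.1 h'.1)]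
  congr 1
  · split_ifs with h
    · simp only [h, and_true]
      exact h
    · simp [h]
  · split_ifs with h
    · simp only [h, and_true]
      omega
    · simp [h]

theorem card_filter_hammingNorm_eq_hammingDist_le_one (c : ι → ZMod 2) (i : ℕ) :
    #{v | hammingNorm v = i ∧ hammingDist v c ≤ 1} =
      (if hammingNorm c = i then 1 else 0) +
        ((if hammingNorm c = i + 1 then i + 1 else 0) +
          (if hammingNorm c + 1 = i then Fintype.card ι + 1 - i else 0)) := by
  have hball : ({v | hammingNorm v = i ∧ hammingDist v c ≤ 1} : Finset (ι → ZMod 2)) =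
      filter (fun v => hammingNorm v = i)
        (insert c (univ.image fun j => (c + Pi.single j 1 : ι → ZMod 2))) := by
    ext v
    simp [hammingDist_le_one_iff, eq_comm, and_comm]
  have hc : c ∉ univ.image fun j => (c + Pi.single j 1 : ι → ZMod 2) := by
    simp [funext_iff, Pi.single_apply]
  rw [hball, filter_insert, ← card_filter_hammingNorm_add_single_one_eq, filter_image]
  split_ifs
  · rw [card_insert_of_notMem fun h => hc (image_subset_image (filter_subset _ _) h),
      card_image_of_injective _ (injective_add_single_one c), add_comm]
  · rw [card_image_of_injective _ (injective_add_single_one c), zero_add]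

variable {κ : Type*} (H : Matrix κ ι (ZMod 2))

theorem mulVec_add_single_one {c : ι → ZMod 2} (hc : H *ᵥ c = 0) (j : ι) :
    H *ᵥ (c + Pi.single j 1) = H.col j := by
  rw [mulVec_add, mulVec_single_one, hc, zero_add]

theorem exists_mulVec_eq_zero_hammingDist_le_one
    (hsurj : ∀ s : κ → ZMod 2, s ≠ 0 → ∃ j, H.col j = s) (v : ι → ZMod 2) :
    ∃ c, H *ᵥ c = 0 ∧ hammingDist v c ≤ 1 := by
  by_cases hv : H *ᵥ v = 0
  · exact ⟨v, hv, by simp⟩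
  obtain ⟨j, hj⟩ := hsurj _ hv
  refine ⟨v + Pi.single j 1, ?_, hammingDist_le_one_iff.2 (Or.inr ⟨j, ?_⟩)⟩
  · rw [mulVec_add, mulVec_single_one, hj, ZModModule.add_self]
  · rw [add_assoc, ZModModule.add_self, add_zero]

theorem eq_of_mulVec_eq_zero_of_hammingDist_le_one (hnz : ∀ j, H.col j ≠ 0)
    (hinj : Function.Injective H.col) {v c c' : ι → ZMod 2} (hc : H *ᵥ c = 0)
    (hc' : H *ᵥ c' = 0) (hvc : hammingDist v c ≤ 1) (hvc' : hammingDist v c' ≤ 1) :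
    c = c' := by
  rcases hammingDist_le_one_iff.1 hvc with rfl | ⟨j, rfl⟩ <;>
    rcases hammingDist_le_one_iff.1 hvc' with h | ⟨k, h⟩
  · exact h
  · exact absurd (by rw [← mulVec_add_single_one H hc' k, ← h, hc]) (hnz k).symm
  · exact absurd (by rw [← mulVec_add_single_one H hc j, h, hc']) (hnz j)
  · obtain rfl : j = k :=
      hinj (by rw [← mulVec_add_single_one H hc j, h, mulVec_add_single_one H hc' k])
    exact add_right_cancel h

variable [Fintype κ]

theorem card_filter_mulVec_eq_zero_hammingDist_le_one (hnz : ∀ j, H.col j ≠ 0)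
    (hinj : Function.Injective H.col) (hsurj : ∀ s : κ → ZMod 2, s ≠ 0 → ∃ j, H.col j = s)
    (v : ι → ZMod 2) : #{c | H *ᵥ c = 0 ∧ hammingDist v c ≤ 1} = 1 := by
  obtain ⟨c, hc, hvc⟩ := exists_mulVec_eq_zero_hammingDist_le_one H hsurj v
  rw [card_eq_one]
  refine ⟨c, eq_singleton_iff_unique_mem.2 ⟨by simp [hc, hvc], fun c' hc' => ?_⟩⟩
  rw [mem_filter] at hc'
  exact eq_of_mulVec_eq_zero_of_hammingDist_le_one H hnz hinj hc'.2.1 hc hc'.2.2 hvc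

theorem choose_eq_sum_card_filter_hammingNorm_eq_hammingDist_le_one (hnz : ∀ j, H.col j ≠ 0)
    (hinj : Function.Injective H.col) (hsurj : ∀ s : κ → ZMod 2, s ≠ 0 → ∃ j, H.col j = s)
    (i : ℕ) :
    (Fintype.card ι).choose i =
      ∑ c with H *ᵥ c = 0, #{v | hammingNorm v = i ∧ hammingDist v c ≤ 1} := by
  have hswap := sum_card_bipartiteAbove_eq_sum_card_bipartiteBelow
    (fun v c => hammingDist v c ≤ 1) (s := {v : ι → ZMod 2 | hammingNorm v = i})
    (t := {c | H *ᵥ c = 0})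
  simp only [bipartiteAbove, bipartiteBelow, filter_filter] at hswap
  rw [← card_filter_hammingNorm_eq, card_eq_sum_ones, ← hswap]
  exact sum_congr rfl fun v _ =>
    (card_filter_mulVec_eq_zero_hammingDist_le_one H hnz hinj hsurj v).symm

end

theorem exists_col_eq_of_card_eq {ι κ : Type*} [Fintype ι] [Fintype κ] [DecidableEq κ]
    (H : Matrix κ ι (ZMod 2)) (hnz : ∀ j, H.col j ≠ 0)
    (hinj : Function.Injective H.col) (hcard : Fintype.card ι = 2 ^ Fintype.card κ - 1)
    {s : κ → ZMod 2} (hs : s ≠ 0) : ∃ j, H.col j = s := by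
  let f : ι → {s : κ → ZMod 2 // s ≠ 0} := fun j => ⟨H.col j, hnz j⟩
  have hf : Function.Bijective f := by
    rw [Fintype.bijective_iff_injective_and_card]
    refine ⟨fun j k h => hinj (congrArg Subtype.val h), ?_⟩
    simp [hcard, Fintype.card_subtype_compl]
  obtain ⟨j, hj⟩ := hf.2 ⟨s, hs⟩
  exact ⟨j, congrArg Subtype.val hj⟩

end BinaryHamming

open BinaryHamming

section

variable {m n : ℕ} (H : Matrix (Fin m) (Fin n) (ZMod 2))

theorem binaryWeightCount_eq_card (h : ℕ) :
    binaryWeightCount H h = #{c | H *ᵥ c = 0 ∧ hammingNorm c = h} := by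
  rw [binaryWeightCount, Nat.card_eq_fintype_card, Fintype.card_subtype]

theorem binaryWeightCount_zero : binaryWeightCount H 0 = 1 := by
  rw [binaryWeightCount_eq_card, card_eq_one]
  exact ⟨0, by ext c; constructor <;> simp +contextual [hammingNorm_eq_zero]⟩

theorem binaryWeightCount_one (hnz : ∀ j, H.col j ≠ 0) : binaryWeightCount H 1 = 0 := by
  rw [binaryWeightCount_eq_card, card_eq_zero, filter_eq_empty_iff]
  rintro c - ⟨hc, h1⟩
  obtain rfl | ⟨j, rfl⟩ := hammingNorm_le_one_iff.1 h1.le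
  · simp at h1
  · exact hnz j (by rwa [mulVec_single_one] at hc)

theorem binaryWeightCount_eq_zero_of_lt {h : ℕ} (hh : n < h) : binaryWeightCount H h = 0 := by
  rw [binaryWeightCount_eq_card, card_eq_zero, filter_eq_empty_iff]
  rintro c - ⟨-, rfl⟩
  exact absurd hh (by simpa using hammingNorm_le_card_fintype (x := c))

theorem binaryWeightCount_recurrence (hnz : ∀ j, H.col j ≠ 0) (hinj : Function.Injective H.col)
    (hsurj : ∀ s : Fin m → ZMod 2, s ≠ 0 → ∃ j, H.col j = s) (i : ℕ) :
    binaryWeightCount H (i + 1) + (i + 2) * binaryWeightCount H (i + 2) +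
      (n - i) * binaryWeightCount H i = n.choose (i + 1) := by
  have hcount :=
    choose_eq_sum_card_filter_hammingNorm_eq_hammingDist_le_one H hnz hinj hsurj (i + 1)
  rw [Fintype.card_fin] at hcount
  simp only [hcount, card_filter_hammingNorm_eq_hammingDist_le_one, sum_add_distrib,
    binaryWeightCount_eq_card, ← sum_filter, sum_const, smul_eq_mul, filter_filter, add_left_inj,
    Fintype.card_fin, Nat.add_sub_add_right]
  ring

end

theorem binary_hamming_weight_distribution_recurrence_general
    (m : ℕ)
    (n : ℕ) (hn : n = 2 ^ m - 1)
    (H : Matrix (Fin m) (Fin n) (ZMod 2))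
    (hnz : ∀ j : Fin n, (fun i => H i j) ≠ 0)
    (hinj : ∀ j k : Fin n, j ≠ k → (fun i => H i j) ≠ fun i => H i k)
    (C : ℕ → ℕ) (hC : ∀ h : ℕ, C h = binaryWeightCount H h) :
    C 0 = 1 ∧ C 1 = 0 ∧
      ∀ i : ℕ, 1 ≤ i →
        ((i : ℤ) + 1) * (C (i + 1) : ℤ) + (C i : ℤ)
            + ((n : ℤ) - (i : ℤ) + 1) * (C (i - 1) : ℤ) =
          (n.choose i : ℤ) := by
  have hcol_inj : Function.Injective H.col := fun j k hjk => by_contra fun h => hinj j k h hjk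
  have hsurj (s : Fin m → ZMod 2) (hs : s ≠ 0) : ∃ j, H.col j = s :=
    exists_col_eq_of_card_eq H hnz hcol_inj (by simp [hn]) hs
  simp only [hC]
  refine ⟨binaryWeightCount_zero H, binaryWeightCount_one H hnz, fun i hi => ?_⟩
  obtain ⟨k, rfl⟩ := Nat.exists_eq_add_of_le' hi
  have hrec := congrArg (Nat.cast : ℕ → ℤ) (binaryWeightCount_recurrence H hnz hcol_inj hsurj k)
  -- `n - k` truncates only when `k > n`, and then no codeword has weight `k`.
  have hlast :
      ((n - k : ℕ) : ℤ) * binaryWeightCount H k = ((n : ℤ) - k) * binaryWeightCount H k := by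
    rcases le_or_gt k n with hk | hk
    · rw [Nat.cast_sub hk]
    · simp [binaryWeightCount_eq_zero_of_lt H hk]
  push_cast at hrec ⊢
  linear_combination hrec - hlast

/-- **Theorem 2.** Let `m > 1` and `n = 2^m - 1`, and let `{C_h}` be the weight
distribution of the binary Hamming code `H(m,2)`, realized as the code whose
parity-check matrix `H` has as columns all `2^m - 1` nonzero vectors of `F_2^m`
(equivalently: the columns are nonzero and pairwise distinct).  Then
`C_0 = 1`, `C_1 = 0`, and for every `i ≥ 1`,
`(i+1) C_{i+1} + C_i + (n - i + 1) C_{i-1} = C(n, i)`. -/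
theorem binary_hamming_weight_distribution_recurrence
    (m : ℕ) (hm : 1 < m)
    (n : ℕ) (hn : n = 2 ^ m - 1)
    (H : Matrix (Fin m) (Fin n) (ZMod 2))
    (hnz : ∀ j : Fin n, (fun i => H i j) ≠ 0)
    (hinj : ∀ j k : Fin n, j ≠ k → (fun i => H i j) ≠ fun i => H i k)
    (C : ℕ → ℕ) (hC : ∀ h : ℕ, C h = binaryWeightCount H h) :
    C 0 = 1 ∧ C 1 = 0 ∧
      ∀ i : ℕ, 1 ≤ i →
        ((i : ℤ) + 1) * (C (i + 1) : ℤ) + (C i : ℤ)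
            + ((n : ℤ) - (i : ℤ) + 1) * (C (i - 1) : ℤ) =
          (n.choose i : ℤ) :=
  binary_hamming_weight_distribution_recurrence_general m n hn H hnz hinj C hC
end

section
/- For every positive integer m, there exist infinitely many prime powers q such that gcd(m, q - 1) = 1. -/
/-- For every positive integer `m`, there exist infinitely many prime powers `q`
such that `gcd(m, q - 1) = 1`. -/
theorem infinite_prime_powers_coprime (m : ℕ) (hm : 0 < m) :
    {q : ℕ | IsPrimePow q ∧ Nat.gcd m (q - 1) = 1}.Infinite := by
  set b : ℕ := ordCompl[2] m with hb
  have hbodd : ¬ 2 ∣ b := Nat.not_dvd_ordCompl Nat.prime_two hm.ne'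
  have hcop : Nat.Coprime 2 b := (Nat.Prime.coprime_iff_not_dvd Nat.prime_two).mpr hbodd
  have hphi : 0 < Nat.totient b := Nat.totient_pos.mpr (Nat.ordCompl_pos 2 hm.ne')
  apply Set.infinite_of_injective_forall_mem
    (f := fun k : ℕ => 2 ^ (k * Nat.totient b + 1))
  · intro i j hij
    simp only at hij
    have h := Nat.pow_right_injective (le_refl 2) hij
    exact Nat.eq_of_mul_eq_mul_right hphi (by omega)
  · intro k
    set r : ℕ := k * Nat.totient b + 1 with hr
    have hr1 : 1 ≤ r := Nat.le_add_left 1 _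
    constructor
    · exact ⟨2, r, Nat.prime_two.prime, hr1, rfl⟩
    · -- gcd m (2^r - 1) = 1
      have h2r : 2 ≤ 2 ^ r := by
        calc 2 = 2 ^ 1 := rfl
        _ ≤ 2 ^ r := Nat.pow_le_pow_right (by norm_num) hr1
      -- b ∣ 2^r - 2
      have hmod : (2 : ℕ) ≡ 2 ^ r [MOD b] := by
        have h1 : (2 : ℕ) ^ Nat.totient b ≡ 1 [MOD b] := Nat.ModEq.pow_totient hcop
        have h2 : ((2 : ℕ) ^ Nat.totient b) ^ k ≡ 1 ^ k [MOD b] := h1.pow k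
        calc (2 : ℕ) = 2 * 1 ^ k := by ring
        _ ≡ 2 * (2 ^ Nat.totient b) ^ k [MOD b] := (h2.symm).mul_left 2
        _ = 2 ^ r := by rw [← pow_mul]; ring
      have hbd : b ∣ 2 ^ r - 2 := (Nat.modEq_iff_dvd' h2r).mp hmod
      set g : ℕ := Nat.gcd m (2 ^ r - 1) with hg
      have hgm : g ∣ m := Nat.gcd_dvd_left _ _
      have hgq : g ∣ 2 ^ r - 1 := Nat.gcd_dvd_right _ _
      have hgodd : ¬ 2 ∣ g := by
        intro h2g
        have : 2 ∣ 2 ^ r - 1 := h2g.trans hgq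
        have h2pow : 2 ∣ 2 ^ r := dvd_pow_self 2 (by omega)
        omega
      have hgb : g ∣ b := by
        have hgcop : Nat.Coprime g (2 ^ m.factorization 2) :=
          Nat.Coprime.pow_right _
            ((Nat.Prime.coprime_iff_not_dvd Nat.prime_two).mpr hgodd).symm
        exact hgcop.dvd_of_dvd_mul_left (by
          rw [Nat.ordProj_mul_ordCompl_eq_self m 2] at *
          exact hgm)
      have : g ∣ 1 := by
        have h1 : g ∣ 2 ^ r - 2 := hgb.trans hbd
        have := Nat.dvd_sub hgq h1
        simpa [show 2 ^ r - 1 - (2 ^ r - 2) = 1 by omega] using this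
      exact Nat.eq_one_of_dvd_one this
end
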